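/- arXiv:math-ph/0609028 — 2 statements merged into one kernel-verified Lean document; each statement's English description precedes it below -/
import Mathlib

section
/- The number of preimages of any fixed Dyck path of length 2k−2 under the map sending a non-returning closed walk (C, v_2, ..., v_{2k}, C) in the (q+1)-regular tree to the sequence (dist(v_2)−1, ..., dist(v_{2k})−1) equals (q+1)·q^{k−1}. -/
/-!
A walk in the tree can be built one step at a time: a vertex at distance `a` from the root has
`q + 1` neighbours at distance `a + 1` if `a = 0`, `q` of them otherwise, and exactly one neighbour
at distance `a - 1`. Hence the walks with a prescribed sequence of distances are counted by the
product of these branching numbers over the up-steps. A non-returning closed walk over a Dyck path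
of length `2k - 2` has distance sequence `0, α 0 + 1, …, α (2k - 2) + 1, 0`, with `k` up-steps of
which only the first starts at the root, which gives `(q + 1) q ^ (k - 1)`.
-/

/-- Vertices of the infinite (q+1)-regular tree: reduced words over an alphabet of
q+1 letters, i.e. lists with no two consecutive letters equal. The root is the
empty word; each vertex is adjacent to its extensions by one letter and (if
nonempty) to the word with its first letter removed, giving degree q+1. -/
def TreeV (q : ℕ) : Type := {l : List (Fin (q + 1)) // l.Chain' (· ≠ ·)}

/-- The root of the (q+1)-regular tree. -/
def treeRoot (q : ℕ) : TreeV q := ⟨[], List.IsChain.nil⟩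

/-- Adjacency in the (q+1)-regular tree: one word is obtained from the other by
prepending a single letter. -/
def treeAdj (q : ℕ) (x y : TreeV q) : Prop :=
  (∃ a : Fin (q + 1), y.val = a :: x.val) ∨ (∃ a : Fin (q + 1), x.val = a :: y.val)

/-- Number of closed walks of length n in the (q+1)-regular tree starting and
ending at the root. -/
noncomputable def closedWalkCount (q n : ℕ) : ℕ :=
  Nat.card {f : Fin (n + 1) → TreeV q //
    f 0 = treeRoot q ∧ f (Fin.last n) = treeRoot q ∧
    ∀ i : Fin n, treeAdj q (f i.castSucc) (f i.succ)}

/-- Number of closed walks of length 2k at the root of the (q+1)-regular tree that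
do not visit the root at any intermediate step. -/
noncomputable def nonReturningWalkCount (q k : ℕ) : ℕ :=
  Nat.card {f : Fin (2 * k + 1) → TreeV q //
    f 0 = treeRoot q ∧ f (Fin.last (2 * k)) = treeRoot q ∧
    (∀ i : Fin (2 * k), treeAdj q (f i.castSucc) (f i.succ)) ∧
    ∀ i : Fin (2 * k + 1), i ≠ 0 → i ≠ Fin.last (2 * k) → f i ≠ treeRoot q}

theorem Nat.card_sigma_of_card_eq {α : Type*} {β : α → Type*} [∀ a, Finite (β a)] {c : ℕ}
    (h : ∀ a, Nat.card (β a) = c) : Nat.card (Σ a, β a) = Nat.card α * c := by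
  rw [Nat.card_congr (Equiv.sigmaEquivProdOfEquiv fun a => (Finite.equivFin (β a)).trans
    (finCongr (h a))), Nat.card_prod, Nat.card_fin]

namespace RegularTree

open Finset

variable {q : ℕ}

lemma eq_treeRoot_iff_length_eq_zero {x : TreeV q} : x = treeRoot q ↔ x.val.length = 0 :=
  ⟨fun h => h ▸ rfl, fun h => Subtype.ext (List.length_eq_zero_iff.mp h)⟩

lemma length_eq_succ_or_of_treeAdj {x y : TreeV q} (h : treeAdj q x y) :
    y.val.length = x.val.length + 1 ∨ x.val.length = y.val.length + 1 := by
  rcases h with ⟨a, ha⟩ | ⟨a, ha⟩ <;> simp [ha]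

abbrev NeighborsAt (x : TreeV q) (m : ℕ) : Type :=
  {y : TreeV q // treeAdj q x y ∧ y.val.length = m}

def neighborCount (q a b : ℕ) : ℕ :=
  if b = a + 1 then (if a = 0 then q + 1 else q) else if a = b + 1 then 1 else 0

noncomputable def neighborsAtSuccEquiv (x : TreeV q) :
    {a : Fin (q + 1) // ∀ b ∈ x.val.head?, a ≠ b} ≃ NeighborsAt x (x.val.length + 1) :=
  Equiv.ofBijective
    (fun a => ⟨⟨a.val :: x.val, List.isChain_cons.mpr ⟨a.2, x.2⟩⟩, Or.inl ⟨a, rfl⟩, rfl⟩)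
    (by
      refine ⟨fun a b hab => Subtype.ext ?_, fun ⟨y, hadj, hlen⟩ => ?_⟩
      · simpa using congrArg (fun y : NeighborsAt x _ => y.val.val) hab
      · rcases hadj with ⟨a, ha⟩ | ⟨a, ha⟩
        · have hchain := y.2
          rw [ha] at hchain
          exact ⟨⟨a, (List.isChain_cons.mp hchain).1⟩, Subtype.ext (Subtype.ext ha.symm)⟩
        · simp only [ha, List.length_cons] at hlen
          omega)

lemma card_neighborsAt_succ (x : TreeV q) :
    Nat.card (NeighborsAt x (x.val.length + 1)) = if x.val.length = 0 then q + 1 else q := by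
  rw [← Nat.card_congr (neighborsAtSuccEquiv x)]
  rcases x with ⟨_ | ⟨b, l⟩, hx⟩
  · simp
  · simp only [List.head?_cons, Option.mem_some_iff, forall_eq', List.length_cons,
      Nat.add_one_ne_zero, if_false]
    rw [← Nat.card_congr (finSuccAboveEquiv b), Nat.card_fin]

lemma card_neighborsAt_of_length_eq_succ {x : TreeV q} {m : ℕ} (h : x.val.length = m + 1) :
    Nat.card (NeighborsAt x m) = 1 := by
  obtain ⟨b, l, hx⟩ := List.exists_cons_of_length_eq_add_one h
  have hl : l.IsChain (· ≠ ·) := by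
    have := x.2
    rw [hx] at this
    exact this.tail
  refine Nat.card_eq_one_iff_exists.mpr ⟨⟨⟨l, hl⟩, Or.inr ⟨b, hx⟩, by simpa [hx] using h⟩, ?_⟩
  rintro ⟨y, hadj, hlen⟩
  rcases hadj with ⟨a, ha⟩ | ⟨a, ha⟩
  · simp only [ha, List.length_cons] at hlen h
    omega
  · rw [hx, List.cons.injEq] at ha
    exact Subtype.ext (Subtype.ext ha.2.symm)

lemma isEmpty_neighborsAt {x : TreeV q} {m : ℕ} (h₁ : m ≠ x.val.length + 1)
    (h₂ : x.val.length ≠ m + 1) : IsEmpty (NeighborsAt x m) :=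
  ⟨fun ⟨y, hadj, hlen⟩ => by
    rcases length_eq_succ_or_of_treeAdj hadj with h | h <;> omega⟩

instance (x : TreeV q) (m : ℕ) : Finite (NeighborsAt x m) := by
  by_cases h₁ : m = x.val.length + 1
  · subst h₁
    exact Finite.of_equiv _ (neighborsAtSuccEquiv x)
  by_cases h₂ : x.val.length = m + 1
  · exact Nat.finite_of_card_ne_zero (by rw [card_neighborsAt_of_length_eq_succ h₂]; simp)
  have := isEmpty_neighborsAt h₁ h₂
  infer_instance

lemma card_neighborsAt (x : TreeV q) (m : ℕ) :
    Nat.card (NeighborsAt x m) = neighborCount q x.val.length m := by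
  unfold neighborCount
  split_ifs with h₁ h₂
  · subst h₁
    rw [card_neighborsAt_succ, if_pos h₂]
  · subst h₁
    rw [card_neighborsAt_succ, if_neg h₂]
  · exact card_neighborsAt_of_length_eq_succ ‹_›
  · have := isEmpty_neighborsAt h₁ ‹_›
    exact Nat.card_of_isEmpty

def ProfileWalk (q n : ℕ) (L : ℕ → ℕ) : Type :=
  {f : Fin (n + 1) → TreeV q //
    (∀ i : Fin n, treeAdj q (f i.castSucc) (f i.succ)) ∧ ∀ i : Fin (n + 1), (f i).val.length = L i}

variable {n : ℕ} {L : ℕ → ℕ} {α : ℕ → ℕ}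

def profileWalkSuccEquiv :
    ProfileWalk q (n + 1) L ≃
      Σ w : ProfileWalk q n L, NeighborsAt (w.1 (Fin.last n)) (L (n + 1)) where
  toFun f := ⟨⟨Fin.init f.1, fun i => by simpa [Fin.init] using f.2.1 i.castSucc,
      fun i => f.2.2 i.castSucc⟩,
    ⟨f.1 (Fin.last (n + 1)), by simpa [Fin.init] using f.2.1 (Fin.last n),
      f.2.2 (Fin.last (n + 1))⟩⟩
  invFun wy := ⟨Fin.snoc wy.1.1 wy.2.1,
    fun i => Fin.lastCases (by simpa using wy.2.2.1) (fun j => by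
      simpa only [Fin.succ_castSucc, Fin.snoc_castSucc] using wy.1.2.1 j) i,
    fun i => Fin.lastCases (by simpa using wy.2.2.2) (fun j => by simpa using wy.1.2.2 j) i⟩
  left_inv f := Subtype.ext (Fin.snoc_init_self f.1)
  right_inv wy := Sigma.subtype_ext (Subtype.ext (Fin.init_snoc (α := fun _ => TreeV q) _ _))
    (Fin.snoc_last (α := fun _ => TreeV q) _ _)

lemma card_profileWalk_zero (h₀ : L 0 = 0) : Nat.card (ProfileWalk q 0 L) = 1 := by
  refine Nat.card_eq_one_iff_exists.mpr
    ⟨⟨fun _ => treeRoot q, fun i => i.elim0, fun i => by simp [Fin.fin_one_eq_zero i, h₀]; rfl⟩, ?_⟩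
  intro w
  refine Subtype.ext (funext fun i => ?_)
  rw [Fin.fin_one_eq_zero i, eq_treeRoot_iff_length_eq_zero, w.2.2 0]
  exact h₀

lemma card_profileWalk_succ :
    Nat.card (ProfileWalk q (n + 1) L) =
      Nat.card (ProfileWalk q n L) * neighborCount q (L n) (L (n + 1)) := by
  rw [Nat.card_congr profileWalkSuccEquiv]
  refine Nat.card_sigma_of_card_eq fun w => ?_
  rw [card_neighborsAt, w.2.2 (Fin.last n), Fin.val_last]

theorem card_profileWalk (h₀ : L 0 = 0) :
    Nat.card (ProfileWalk q n L) = ∏ i ∈ range n, neighborCount q (L i) (L (i + 1)) := by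
  induction n with
  | zero => exact card_profileWalk_zero h₀
  | succ n ih => rw [card_profileWalk_succ, ih, prod_range_succ]

lemma two_mul_card_up_steps_add (hstep : ∀ i < n, α (i + 1) = α i + 1 ∨ α i = α (i + 1) + 1) :
    2 * #{i ∈ range n | α (i + 1) = α i + 1} + α 0 = α n + n := by
  induction n with
  | zero => simp
  | succ n ih =>
    have := ih fun i hi => hstep i (by omega)
    rw [card_filter, sum_range_succ, ← card_filter]
    rcases hstep n (by omega) with h | h <;> simp only [h] <;> split_ifs <;> omega

lemma prod_neighborCount_add_one (hstep : ∀ i < n, α (i + 1) = α i + 1 ∨ α i = α (i + 1) + 1) :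
    ∏ i ∈ range n, neighborCount q (α i + 1) (α (i + 1) + 1) =
      q ^ #{i ∈ range n | α (i + 1) = α i + 1} := by
  rw [card_filter, ← prod_pow_eq_pow_sum]
  refine prod_congr rfl fun i hi => ?_
  rcases hstep i (mem_range.mp hi) with h | h
  · simp [neighborCount, h]
  · simp [neighborCount, h, show α (i + 1) ≠ α (i + 1) + 1 + 1 by omega]

/-- The distance profile `0, α 0 + 1, …, α (n - 2) + 1, 0` of a non-returning closed walk of
length `n` lying over `α`. -/
def dyckWalkProfile (n : ℕ) (α : ℕ → ℕ) : ℕ → ℕ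
  | 0 => 0
  | i + 1 => if i + 1 < n then α i + 1 else 0

lemma dyckWalkProfile_add_one_of_lt {i : ℕ} (h : i + 1 < n) :
    dyckWalkProfile n α (i + 1) = α i + 1 :=
  if_pos h

lemma dyckWalkProfile_self : dyckWalkProfile n α n = 0 := by
  cases n <;> simp [dyckWalkProfile]

lemma prod_neighborCount_dyckWalkProfile {m : ℕ} (h₀ : α 0 = 0) (hlast : α (2 * m) = 0)
    (hstep : ∀ i < 2 * m, α (i + 1) = α i + 1 ∨ α i = α (i + 1) + 1) :
    ∏ i ∈ range (2 * m + 2),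
        neighborCount q (dyckWalkProfile (2 * m + 2) α i) (dyckWalkProfile (2 * m + 2) α (i + 1)) =
      (q + 1) * q ^ m := by
  have hmiddle : ∏ i ∈ range (2 * m), neighborCount q (dyckWalkProfile (2 * m + 2) α (i + 1))
      (dyckWalkProfile (2 * m + 2) α (i + 1 + 1)) = q ^ m := by
    rw [prod_congr rfl fun i hi => by
      rw [dyckWalkProfile_add_one_of_lt (by simp at hi; omega),
        dyckWalkProfile_add_one_of_lt (by simp at hi; omega)],
      prod_neighborCount_add_one hstep]
    have := two_mul_card_up_steps_add hstep
    rw [h₀, hlast] at this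
    congr 1
    omega
  rw [prod_range_succ, prod_range_succ', hmiddle, dyckWalkProfile_self,
    dyckWalkProfile_add_one_of_lt (by omega), dyckWalkProfile_add_one_of_lt (by omega), h₀, hlast]
  simp [dyckWalkProfile, neighborCount, mul_comm]

lemma nonReturning_lengths_iff_dyckWalkProfile (f : Fin (n + 1) → TreeV q) :
    ((f 0 = treeRoot q ∧ f (Fin.last n) = treeRoot q ∧
        (∀ i : Fin n, treeAdj q (f i.castSucc) (f i.succ)) ∧
        ∀ i : Fin (n + 1), i ≠ 0 → i ≠ Fin.last n → f i ≠ treeRoot q) ∧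
      ∀ i : ℕ, (hi : i < n - 1) → (f ⟨i + 1, by omega⟩).val.length = α i + 1) ↔
    (∀ i : Fin n, treeAdj q (f i.castSucc) (f i.succ)) ∧
      ∀ i : Fin (n + 1), (f i).val.length = dyckWalkProfile n α i := by
  simp only [ne_eq, eq_treeRoot_iff_length_eq_zero]
  constructor
  · rintro ⟨⟨hfirst, hlast, hadj, -⟩, hlen⟩
    refine ⟨hadj, fun ⟨i, hi⟩ => ?_⟩
    rcases i with _ | i
    · exact hfirst
    by_cases hin : i + 1 < n
    · rw [dyckWalkProfile_add_one_of_lt hin]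
      exact hlen i (by omega)
    · obtain rfl : i + 1 = n := by omega
      rw [dyckWalkProfile_self]
      exact hlast
  · rintro ⟨hadj, hlen⟩
    refine ⟨⟨hlen 0, (hlen (Fin.last n)).trans dyckWalkProfile_self, hadj,
      fun ⟨i, hi⟩ hi₀ hin => ?_⟩, fun i hi => ?_⟩
    · obtain ⟨j, rfl⟩ := Nat.exists_eq_succ_of_ne_zero (Fin.val_ne_of_ne hi₀)
      have hjn : j + 1 ≠ n := by simpa [Fin.ext_iff] using hin
      rw [hlen, dyckWalkProfile_add_one_of_lt (by omega)]
      exact Nat.succ_ne_zero _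
    · rw [hlen, dyckWalkProfile_add_one_of_lt (by omega)]

end RegularTree

open RegularTree in
/-- For any fixed Dyck path (α_1,...,α_{2k−1}) of length 2k−2 (with
α_1 = α_{2k−1} = 0 and successive terms differing by 1), the number of
non-returning closed walks (C, v_2, ..., v_{2k}, C) in the (q+1)-regular tree
projecting to it via v ↦ dist(v) − 1 equals (q+1)·q^{k−1}.  Here dist(v) is the
distance to the root, i.e. the length of the reduced word v. -/
theorem card_fiber_over_dyck_path (q k : ℕ) (hk : 1 ≤ k)
    (α : ℕ → ℕ) (h0 : α 0 = 0) (hlast : α (2 * k - 2) = 0)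
    (hstep : ∀ i, i < 2 * k - 2 → α (i + 1) = α i + 1 ∨ α i = α (i + 1) + 1) :
    Nat.card {f : Fin (2 * k + 1) → TreeV q //
      (f 0 = treeRoot q ∧ f (Fin.last (2 * k)) = treeRoot q ∧
        (∀ i : Fin (2 * k), treeAdj q (f i.castSucc) (f i.succ)) ∧
        ∀ i : Fin (2 * k + 1), i ≠ 0 → i ≠ Fin.last (2 * k) → f i ≠ treeRoot q) ∧
      ∀ i : ℕ, (hi : i < 2 * k - 1) →
        (f ⟨i + 1, by omega⟩).val.length = α i + 1} =
    (q + 1) * q ^ (k - 1) := by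
  obtain ⟨m, rfl⟩ : ∃ m, k = m + 1 := ⟨k - 1, by omega⟩
  have htwo : 2 * (m + 1) = 2 * m + 2 := by ring
  rw [show 2 * (m + 1) - 2 = 2 * m by omega] at hlast hstep
  calc _ = Nat.card (ProfileWalk q (2 * (m + 1)) (dyckWalkProfile (2 * (m + 1)) α)) :=
        Nat.card_congr (Equiv.subtypeEquivRight nonReturning_lengths_iff_dyckWalkProfile)
    _ = (q + 1) * q ^ m := by
        rw [card_profileWalk rfl, htwo, prod_neighborCount_dyckWalkProfile h0 hlast hstep]
end

section
/- For any integers q ≥ 1 and l ≥ 1, the coefficient of s^k in the power series expansion of (l/√(1−4qs²)) · ((1 − √(1−4qs²))/(2qs))^l is nonnegative for all k, is zero for k < l, and the series has radius of convergence 1/(2√q). -/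
/-!
Write `A(s) = (1 - √(1 - 4qs²)) / (2qs) = ∑ₙ catalan n · qⁿ · s^(2n+1)`. Since
`1 - 2qs · A(s) = √(1 - 4qs²)`, the function equals `l · A(s)^l · (1 - 2qs · A(s))⁻¹`, i.e. it is
the sum of the formal power series `l · a^l · (1 - 2qXa)⁻¹`, where `a` has the Catalan coefficients
of `A`. All series involved have nonnegative coefficients, so every Cauchy product and the
geometric series in `2qXa` may be rearranged freely for `|s| < 1/(2√q)`; and `X^l ∣ a^l`.
For `|s| > 1/(2√q)` the coefficient of `s^(2n+l)` is at least `l · catalan n · qⁿ`, so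
convergence would force `∑ catalan n · xⁿ` to converge at `x = qs² > 1/4`, contradicting
`catalan n ≥ 4ⁿ / (4n²)`.
-/

open PowerSeries Finset Filter Topology

section CauchyProduct

variable {R : Type*} [NormedCommRing R] [CompleteSpace R]

theorem PowerSeries.hasSum_coeff_mul {f g : R⟦X⟧} {s F G : R}
    (hf : HasSum (fun n => coeff n f * s ^ n) F) (hg : HasSum (fun n => coeff n g * s ^ n) G)
    (hf' : Summable fun n => ‖coeff n f * s ^ n‖) (hg' : Summable fun n => ‖coeff n g * s ^ n‖) :
    HasSum (fun n => coeff n (f * g) * s ^ n) (F * G) := by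
  have hprod := tsum_mul_tsum_eq_tsum_sum_antidiagonal_of_summable_norm hf' hg'
  rw [hf.tsum_eq, hg.tsum_eq] at hprod
  have hterm : (fun n => ∑ kl ∈ antidiagonal n,
      coeff kl.1 f * s ^ kl.1 * (coeff kl.2 g * s ^ kl.2)) = fun n => coeff n (f * g) * s ^ n := by
    ext n
    rw [coeff_mul, sum_mul]
    refine sum_congr rfl fun kl hkl => ?_
    rw [← mem_antidiagonal.mp hkl, pow_add]
    ring
  rw [hprod, ← hterm]
  exact (summable_sum_mul_antidiagonal_of_summable_norm' hf' hf.summable hg' hg.summable).hasSum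

end CauchyProduct

section NonnegCoeff

variable {R : Type*} [CommSemiring R] [PartialOrder R] {f g : R⟦X⟧}

theorem PowerSeries.coeff_C_nonneg {c : R} (hc : 0 ≤ c) (n : ℕ) : 0 ≤ coeff n (C c) := by
  rw [coeff_C]
  split <;> simp [hc]

theorem PowerSeries.coeff_X_nonneg [IsOrderedRing R] (n : ℕ) : 0 ≤ coeff n (X : R⟦X⟧) := by
  rw [coeff_X]
  split <;> simp

theorem PowerSeries.coeff_mul_nonneg [IsOrderedRing R] (hf : ∀ n, 0 ≤ coeff n f)
    (hg : ∀ n, 0 ≤ coeff n g) (n : ℕ) : 0 ≤ coeff n (f * g) := by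
  rw [coeff_mul]
  exact sum_nonneg fun kl _ => mul_nonneg (hf _) (hg _)

theorem PowerSeries.coeff_pow_nonneg [IsOrderedRing R] (hf : ∀ n, 0 ≤ coeff n f) (m n : ℕ) :
    0 ≤ coeff n (f ^ m) := by
  induction m generalizing n with
  | zero => rw [pow_zero, coeff_one]; split <;> simp
  | succ m ih => rw [pow_succ]; exact coeff_mul_nonneg ih hf n

theorem PowerSeries.coeff_mul_coeff_le_coeff_mul [IsOrderedRing R] (hf : ∀ n, 0 ≤ coeff n f)
    (hg : ∀ n, 0 ≤ coeff n g) (i j : ℕ) :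
    coeff i f * coeff j g ≤ coeff (i + j) (f * g) := by
  rw [coeff_mul]
  exact single_le_sum (f := fun kl : ℕ × ℕ => coeff kl.1 f * coeff kl.2 g)
    (fun kl _ => mul_nonneg (hf _) (hg _)) (a := (i, j)) (mem_antidiagonal.mpr rfl)

theorem PowerSeries.coeff_pow_le_coeff_pow [IsOrderedRing R] (hf : ∀ n, 0 ≤ coeff n f)
    (i m : ℕ) : coeff i f ^ m ≤ coeff (i * m) (f ^ m) := by
  induction m with
  | zero => simp
  | succ m ih =>
    rw [pow_succ, pow_succ, mul_add, mul_one]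
    exact (mul_le_mul_of_nonneg_right ih (hf i)).trans
      (coeff_mul_coeff_le_coeff_mul (coeff_pow_nonneg hf m) hf _ _)

end NonnegCoeff

theorem PowerSeries.coeff_pow_of_lt {R : Type*} [CommSemiring R] {h : R⟦X⟧}
    (h0 : constantCoeff h = 0) {j k : ℕ} (hk : k < j) : coeff k (h ^ j) = 0 :=
  X_pow_dvd_iff.mp (pow_dvd_pow_of_dvd (X_dvd_iff.mpr h0) j) k hk

theorem PowerSeries.coeff_inv_one_sub {K : Type*} [Field K] {h : K⟦X⟧}
    (h0 : constantCoeff h = 0) (k : ℕ) :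
    coeff k (1 - h)⁻¹ = ∑ j ∈ range (k + 1), coeff k (h ^ j) := by
  have hunit : constantCoeff (1 - h) ≠ 0 := by simp [h0]
  have hgeom : ∑ j ∈ range (k + 1), h ^ j = (1 - h)⁻¹ - (1 - h)⁻¹ * h ^ (k + 1) := by
    rw [← mul_one_sub, ← mul_neg_geom_sum, ← mul_assoc, PowerSeries.inv_mul_cancel _ hunit,
      one_mul]
  rw [← map_sum, hgeom, map_sub, mul_comm,
    X_pow_dvd_iff.mp (dvd_mul_of_dvd_left (pow_dvd_pow_of_dvd (X_dvd_iff.mpr h0) _) _) k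
      (Nat.lt_succ_self k), sub_zero]

theorem PowerSeries.coeff_inv_one_sub_nonneg {K : Type*} [Field K] [PartialOrder K]
    [IsOrderedRing K] {h : K⟦X⟧} (hh : ∀ n, 0 ≤ coeff n h) (h0 : constantCoeff h = 0) (k : ℕ) :
    0 ≤ coeff k (1 - h)⁻¹ := by
  rw [coeff_inv_one_sub h0]
  exact sum_nonneg fun j _ => coeff_pow_nonneg hh j k

def HasNonnegExpansion (f : ℝ⟦X⟧) (F : ℝ → ℝ) (ρ : ℝ) : Prop :=
  (∀ n, 0 ≤ coeff n f) ∧ ∀ s, |s| < ρ → HasSum (fun n => coeff n f * s ^ n) (F s)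

theorem hasNonnegExpansion_C {ρ c : ℝ} (hc : 0 ≤ c) :
    HasNonnegExpansion (C c) (fun _ => c) ρ := by
  refine ⟨coeff_C_nonneg hc, fun s _ => ?_⟩
  convert hasSum_single (f := fun n => coeff n (C c) * s ^ n) 0
    fun n hn => by simp [coeff_C, hn]
  simp

theorem hasNonnegExpansion_X {ρ : ℝ} : HasNonnegExpansion X (fun s => s) ρ := by
  refine ⟨coeff_X_nonneg, fun s _ => ?_⟩
  convert hasSum_single (f := fun n => coeff n (PowerSeries.X : ℝ⟦X⟧) * s ^ n) 1
    fun n hn => by simp [coeff_X, hn]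
  simp

namespace HasNonnegExpansion

variable {f g : ℝ⟦X⟧} {F G : ℝ → ℝ} {ρ : ℝ}

theorem summable_norm (hf : HasNonnegExpansion f F ρ) {s : ℝ} (hs : |s| < ρ) :
    Summable fun n => ‖coeff n f * s ^ n‖ := by
  simpa only [norm_mul, norm_pow, Real.norm_eq_abs, abs_of_nonneg (hf.1 _)] using
    (hf.2 |s| ((abs_abs s).symm ▸ hs)).summable

theorem mul (hf : HasNonnegExpansion f F ρ) (hg : HasNonnegExpansion g G ρ) :
    HasNonnegExpansion (f * g) (fun s => F s * G s) ρ :=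
  ⟨coeff_mul_nonneg hf.1 hg.1, fun s hs =>
    hasSum_coeff_mul (hf.2 s hs) (hg.2 s hs) (hf.summable_norm hs) (hg.summable_norm hs)⟩

theorem pow (hf : HasNonnegExpansion f F ρ) (m : ℕ) :
    HasNonnegExpansion (f ^ m) (fun s => F s ^ m) ρ := by
  induction m with
  | zero => simpa using hasNonnegExpansion_C (ρ := ρ) zero_le_one
  | succ m ih => simpa only [pow_succ] using ih.mul hf

theorem inv_one_sub (hf : HasNonnegExpansion f F ρ) (h0 : constantCoeff f = 0)
    (hF : ∀ s, |s| < ρ → |F s| < 1) :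
    HasNonnegExpansion (1 - f)⁻¹ (fun s => (1 - F s)⁻¹) ρ := by
  refine ⟨coeff_inv_one_sub_nonneg hf.1 h0, fun s hs => ?_⟩
  -- Sum the absolutely convergent double series by rows (a geometric series) and by columns
  -- (finite sums, since `coeff k (f ^ j) = 0` for `k < j`).
  set b : ℕ × ℕ → ℝ := fun p => coeff p.2 (f ^ p.1) * s ^ p.2
  have hrow (j : ℕ) : HasSum (fun k => b (j, k)) (F s ^ j) := (hf.pow j).2 s hs
  have hb : Summable b := by
    refine Summable.of_norm ((summable_prod_of_nonneg fun _ => norm_nonneg _).mpr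
      ⟨fun j => (hf.pow j).summable_norm hs, ?_⟩)
    have habs : |(|s|)| < ρ := (abs_abs s).symm ▸ hs
    convert summable_geometric_of_abs_lt_one (hF |s| habs) using 2 with j
    simpa only [b, norm_mul, norm_pow, Real.norm_eq_abs,
      abs_of_nonneg (coeff_pow_nonneg hf.1 _ _)] using ((hf.pow j).2 |s| habs).tsum_eq
  have hsum : ∑' p, b p = (1 - F s)⁻¹ :=
    (hb.hasSum.prod_fiberwise hrow).unique (hasSum_geometric_of_abs_lt_one (hF s hs))
  have hcol (k : ℕ) : HasSum (fun j => b (j, k)) (coeff k (1 - f)⁻¹ * s ^ k) := by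
    rw [coeff_inv_one_sub h0, sum_mul]
    exact hasSum_sum_of_ne_finset_zero fun j hj => by
      rw [mem_range, not_lt] at hj
      simp only [b, coeff_pow_of_lt h0 hj, zero_mul]
  show HasSum _ (1 - F s)⁻¹
  rw [← hsum, ← (Equiv.prodComm ℕ ℕ).tsum_eq b]
  exact hb.prod_symm.hasSum.prod_fiberwise hcol

end HasNonnegExpansion

theorem catalan_div_four_pow_eq_sub (n : ℕ) :
    (catalan n : ℝ) / 4 ^ n =
      2 * ((n.centralBinom : ℝ) / 4 ^ n - ((n + 1).centralBinom : ℝ) / 4 ^ (n + 1)) := by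
  have hcat : ((n : ℝ) + 1) * catalan n = n.centralBinom := by
    exact_mod_cast succ_mul_catalan_eq_centralBinom n
  have hsucc : ((n : ℝ) + 1) * (n + 1).centralBinom = 2 * (2 * n + 1) * n.centralBinom := by
    exact_mod_cast Nat.succ_mul_centralBinom_succ n
  have hn : (n : ℝ) + 1 ≠ 0 := by positivity
  field_simp
  rw [pow_succ]
  apply mul_left_cancel₀ hn
  linear_combination (4 * (4 : ℝ) ^ n) * hcat + (2 * (4 : ℝ) ^ n) * hsucc

theorem sum_range_catalan_div_four_pow_le (N : ℕ) :
    ∑ n ∈ range N, (catalan n : ℝ) / 4 ^ n ≤ 2 := by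
  rw [sum_congr rfl fun n _ => catalan_div_four_pow_eq_sub n, ← mul_sum,
    sum_range_sub' (fun n => (n.centralBinom : ℝ) / 4 ^ n)]
  have : 0 ≤ (N.centralBinom : ℝ) / 4 ^ N := by positivity
  simp only [Nat.centralBinom_zero]
  linarith

theorem hasSum_catalan {x : ℝ} (hx0 : 0 < x) (hx : x < 1 / 4) :
    HasSum (fun n => (catalan n : ℝ) * x ^ n) ((1 - √(1 - 4 * x)) / (2 * x)) := by
  have hpartial (N : ℕ) : ∑ n ∈ range N, (catalan n : ℝ) * x ^ n ≤ 2 := by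
    refine (sum_le_sum fun n _ => ?_).trans (sum_range_catalan_div_four_pow_le N)
    rw [div_eq_mul_one_div, ← one_div_pow]
    gcongr
  have hnonneg (n : ℕ) : 0 ≤ (catalan n : ℝ) * x ^ n := by positivity
  have hsum := summable_of_sum_range_le hnonneg hpartial
  set T := ∑' n, (catalan n : ℝ) * x ^ n
  have hT : T ≤ 2 := Real.tsum_le_of_sum_range_le hnonneg hpartial
  set cat : ℝ⟦X⟧ := mk fun n => (catalan n : ℝ)
  have hcat : HasSum (fun n => coeff n cat * x ^ n) T := by simpa [cat] using hsum.hasSum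
  have hnorm : Summable fun n => ‖coeff n cat * x ^ n‖ := by
    simpa [cat, abs_of_nonneg hx0.le] using hsum
  have hcoeff (n : ℕ) : coeff n (cat * cat) = catalan (n + 1) := by
    simp [cat, coeff_mul, catalan_succ']
  have hsq : HasSum (fun n => (catalan (n + 1) : ℝ) * x ^ n) (T * T) := by
    simpa only [hcoeff] using hasSum_coeff_mul hcat hcat hnorm hnorm
  have hquad : T - 1 = x * (T * T) := by
    have hshift := (hasSum_nat_add_iff' 1).mpr hsum.hasSum
    have hmul : HasSum (fun n => (catalan (n + 1) : ℝ) * x ^ (n + 1)) (x * (T * T)) := by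
      simpa only [pow_succ, mul_comm x, mul_assoc] using hsq.mul_left x
    simpa using hshift.unique hmul
  have hdisc : (2 * x * T - 1) ^ 2 = √(1 - 4 * x) ^ 2 := by
    rw [Real.sq_sqrt (by linarith)]
    linear_combination (-4 * x) * hquad
  -- `T ≤ 2 < 1 / (2x)` excludes the other root `(1 + √(1 - 4x)) / (2x)`.
  have hroot : 2 * x * T - 1 = -√(1 - 4 * x) := by
    refine (sq_eq_sq_iff_eq_or_eq_neg.mp hdisc).resolve_left fun h => ?_
    nlinarith [Real.sqrt_nonneg (1 - 4 * x)]
  convert hsum.hasSum using 1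
  field_simp
  linarith

theorem four_pow_le_four_mul_sq_mul_catalan {n : ℕ} (hn : 0 < n) :
    4 ^ n ≤ 4 * n ^ 2 * catalan n := by
  have h := Nat.four_pow_le_two_mul_self_mul_centralBinom n hn
  rw [← succ_mul_catalan_eq_centralBinom] at h
  calc 4 ^ n ≤ 2 * n * ((n + 1) * catalan n) := h
    _ ≤ 2 * n * ((2 * n) * catalan n) := by gcongr; omega
    _ = 4 * n ^ 2 * catalan n := by ring

theorem not_summable_catalan {x : ℝ} (hx : 1 / 4 < x) :
    ¬ Summable fun n => (catalan n : ℝ) * x ^ n := by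
  intro hsum
  have hlim : Tendsto (fun n : ℕ => (catalan n : ℝ) * x ^ n * (4 * ((n : ℝ) ^ 2 / (4 * x) ^ n)))
      atTop (𝓝 0) := by
    simpa using hsum.tendsto_atTop_zero.mul
      ((tendsto_pow_const_div_const_pow_of_one_lt 2 (by linarith : (1 : ℝ) < 4 * x)).const_mul 4)
  have hge : ∀ᶠ n : ℕ in atTop,
      1 ≤ (catalan n : ℝ) * x ^ n * (4 * ((n : ℝ) ^ 2 / (4 * x) ^ n)) := by
    filter_upwards [eventually_gt_atTop 0] with n hn
    have hcast : (4 : ℝ) ^ n ≤ 4 * n ^ 2 * catalan n := by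
      exact_mod_cast four_pow_le_four_mul_sq_mul_catalan hn
    have hpos : 0 < (4 * x) ^ n := by positivity
    rw [mul_div_assoc', mul_div_assoc', le_div_iff₀ hpos, one_mul, mul_pow]
    nlinarith [pow_pos (by linarith : (0 : ℝ) < x) n]
  obtain ⟨n, hn⟩ := (hge.and (hlim.eventually (gt_mem_nhds one_pos))).exists
  linarith [hn.1, hn.2]

theorem four_mul_mul_sq_lt_one {q s : ℝ} (hs : |s| < 1 / (2 * √q)) : 4 * q * s ^ 2 < 1 := by
  have hq : 0 < √q := by
    have := (abs_nonneg s).trans_lt hs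
    rw [one_div_pos] at this
    linarith
  rw [lt_div_iff₀ (by positivity)] at hs
  have := Real.sq_sqrt (Real.sqrt_pos.mp hq).le
  nlinarith [mul_self_lt_mul_self (by positivity) hs, sq_abs s]

theorem one_lt_four_mul_mul_sq {q s : ℝ} (hq : 0 < q) (hs : 1 / (2 * √q) < |s|) :
    1 < 4 * q * s ^ 2 := by
  rw [div_lt_iff₀ (by positivity)] at hs
  have := Real.sq_sqrt hq.le
  nlinarith [sq_abs s, abs_nonneg s, Real.sqrt_nonneg q]

section GeodesicSeries

variable (q : ℕ)

noncomputable def oddCatalanSeries : ℝ⟦X⟧ :=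
  mk fun k => if Odd k then (catalan (k / 2) : ℝ) * q ^ (k / 2) else 0

-- At `s = 0` this is `0` by the convention `x / 0 = 0`, which is also the sum of the series.
noncomputable def oddCatalanFun (s : ℝ) : ℝ := (1 - √(1 - 4 * q * s ^ 2)) / (2 * q * s)

theorem coeff_oddCatalanSeries_nonneg (k : ℕ) : 0 ≤ coeff k (oddCatalanSeries q) := by
  rw [oddCatalanSeries, coeff_mk]
  split <;> positivity

theorem coeff_oddCatalanSeries_two_mul_add_one (n : ℕ) :
    coeff (2 * n + 1) (oddCatalanSeries q) = catalan n * q ^ n := by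
  have : (2 * n + 1) / 2 = n := by omega
  simp [oddCatalanSeries, this]

theorem coeff_one_oddCatalanSeries : coeff 1 (oddCatalanSeries q) = 1 := by
  simpa using coeff_oddCatalanSeries_two_mul_add_one q 0

theorem constantCoeff_oddCatalanSeries : constantCoeff (oddCatalanSeries q) = 0 := by
  simp [oddCatalanSeries, ← coeff_zero_eq_constantCoeff_apply]

theorem two_mul_mul_oddCatalanFun (s : ℝ) :
    2 * q * s * oddCatalanFun q s = 1 - √(1 - 4 * q * s ^ 2) := by
  rcases eq_or_ne ((q : ℝ) * s) 0 with h | h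
  · have : (q : ℝ) * s ^ 2 = 0 := by rw [sq, ← mul_assoc, h, zero_mul]
    simp [oddCatalanFun, mul_assoc, h, this]
  · have h2 : (2 * q * s : ℝ) ≠ 0 := by rw [mul_assoc]; exact mul_ne_zero two_ne_zero h
    exact mul_div_cancel₀ _ h2

theorem hasNonnegExpansion_oddCatalanSeries (hq : 0 < q) :
    HasNonnegExpansion (oddCatalanSeries q) (oddCatalanFun q) (1 / (2 * √q)) := by
  refine ⟨coeff_oddCatalanSeries_nonneg q, fun s hs => ?_⟩
  rcases eq_or_ne s 0 with rfl | hs0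
  · convert hasSum_zero with k
    rcases eq_or_ne k 0 with rfl | hk
    · simp [coeff_zero_eq_constantCoeff_apply, constantCoeff_oddCatalanSeries]
    · simp [hk]
    · simp [oddCatalanFun]
  have hx : 4 * ((q : ℝ) * s ^ 2) < 1 := by linarith [four_mul_mul_sq_lt_one hs]
  have hcat := (hasSum_catalan (x := q * s ^ 2) (by positivity) (by linarith)).mul_left s
  have hodd : Function.Injective fun n : ℕ => 2 * n + 1 := fun a b h => by simp at h; omega
  have heven (k : ℕ) (hk : k ∉ Set.range fun n : ℕ => 2 * n + 1) :
      coeff k (oddCatalanSeries q) * s ^ k = 0 := by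
    have : ¬ Odd k := fun ⟨n, hn⟩ => hk ⟨n, hn.symm⟩
    simp [oddCatalanSeries, this]
  have hterm : (fun n => coeff (2 * n + 1) (oddCatalanSeries q) * s ^ (2 * n + 1))
      = fun n => s * (catalan n * (q * s ^ 2) ^ n) := by
    ext n
    rw [coeff_oddCatalanSeries_two_mul_add_one]
    ring
  have hvalue : s * ((1 - √(1 - 4 * (q * s ^ 2))) / (2 * (q * s ^ 2))) = oddCatalanFun q s := by
    rw [oddCatalanFun, ← mul_assoc]
    field_simp
  rw [← hodd.hasSum_iff heven, ← hvalue, Function.comp_def, hterm]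
  exact hcat

theorem abs_two_mul_mul_oddCatalanFun_lt_one {s : ℝ} (hs : |s| < 1 / (2 * √q)) :
    |2 * q * s * oddCatalanFun q s| < 1 := by
  have hpos : 0 < 1 - 4 * q * s ^ 2 := by linarith [four_mul_mul_sq_lt_one hs]
  have hle : √(1 - 4 * q * s ^ 2) ≤ 1 := Real.sqrt_le_one.mpr (by nlinarith [sq_nonneg s])
  rw [two_mul_mul_oddCatalanFun, abs_lt]
  constructor <;> linarith [Real.sqrt_pos.mpr hpos]

variable (l : ℕ)

noncomputable def geodesicSeries : ℝ⟦X⟧ :=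
  C (l : ℝ) * oddCatalanSeries q ^ l * (1 - C (2 * q : ℝ) * X * oddCatalanSeries q)⁻¹

theorem hasNonnegExpansion_geodesicSeries (hq : 0 < q) :
    HasNonnegExpansion (geodesicSeries q l)
      (fun s => l / √(1 - 4 * q * s ^ 2) * oddCatalanFun q s ^ l) (1 / (2 * √q)) := by
  have hcat := hasNonnegExpansion_oddCatalanSeries q hq
  have hstep :=
    ((hasNonnegExpansion_C (by positivity : (0 : ℝ) ≤ 2 * q)).mul hasNonnegExpansion_X).mul hcat
  have h0 : constantCoeff (C (2 * q : ℝ) * X * oddCatalanSeries q) = 0 := by simp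
  rw [geodesicSeries]
  convert ((hasNonnegExpansion_C l.cast_nonneg).mul (hcat.pow l)).mul
    (hstep.inv_one_sub h0 fun s hs => abs_two_mul_mul_oddCatalanFun_lt_one q hs) using 2 with s
  rw [two_mul_mul_oddCatalanFun, sub_sub_cancel]
  ring

theorem coeff_geodesicSeries_of_lt {k : ℕ} (hk : k < l) :
    coeff k (geodesicSeries q l) = 0 := by
  have hdvd : X ^ l ∣ geodesicSeries q l :=
    dvd_mul_of_dvd_left (dvd_mul_of_dvd_right
      (pow_dvd_pow_of_dvd (X_dvd_iff.mpr (constantCoeff_oddCatalanSeries q)) l) _) _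
  exact X_pow_dvd_iff.mp hdvd k hk

theorem le_coeff_geodesicSeries (hl : 0 < l) (n : ℕ) :
    l * (catalan n * q ^ n) ≤ coeff (2 * n + l) (geodesicSeries q l) := by
  obtain ⟨m, rfl⟩ : ∃ m, l = m + 1 := ⟨l - 1, by omega⟩
  have ha := coeff_oddCatalanSeries_nonneg q
  have hstep : ∀ k, 0 ≤ coeff k (C (2 * q : ℝ) * X * oddCatalanSeries q) :=
    coeff_mul_nonneg (coeff_mul_nonneg (coeff_C_nonneg (by positivity)) coeff_X_nonneg) ha
  have hpow : catalan n * q ^ n ≤ coeff (2 * n + (m + 1)) (oddCatalanSeries q ^ (m + 1)) := by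
    calc (catalan n * q ^ n : ℝ)
        = coeff 1 (oddCatalanSeries q) ^ m * coeff (2 * n + 1) (oddCatalanSeries q) := by
          rw [coeff_one_oddCatalanSeries, one_pow, one_mul,
            coeff_oddCatalanSeries_two_mul_add_one]
      _ ≤ coeff (1 * m) (oddCatalanSeries q ^ m) * coeff (2 * n + 1) (oddCatalanSeries q) := by
          gcongr
          · exact ha _
          · exact coeff_pow_le_coeff_pow ha 1 m
      _ ≤ _ := by
          rw [pow_succ, show 2 * n + (m + 1) = 1 * m + (2 * n + 1) by ring]
          exact coeff_mul_coeff_le_coeff_mul (coeff_pow_nonneg ha m) ha _ _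
  have hinv : coeff 0 (1 - C (2 * q : ℝ) * X * oddCatalanSeries q)⁻¹ = 1 := by
    simp [coeff_zero_eq_constantCoeff_apply, constantCoeff_inv]
  calc (↑(m + 1) * (catalan n * q ^ n) : ℝ)
      ≤ coeff (2 * n + (m + 1)) (C (↑(m + 1) : ℝ) * oddCatalanSeries q ^ (m + 1))
          * coeff 0 (1 - C (2 * q : ℝ) * X * oddCatalanSeries q)⁻¹ := by
        rw [hinv, mul_one, coeff_C_mul]
        gcongr
    _ ≤ coeff (2 * n + (m + 1)) (geodesicSeries q (m + 1)) :=
        coeff_mul_coeff_le_coeff_mul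
          (coeff_mul_nonneg (coeff_C_nonneg (by positivity)) (coeff_pow_nonneg ha _))
          (coeff_inv_one_sub_nonneg hstep (by simp)) _ 0

theorem not_summable_geodesicSeries (hq : 0 < q) (hl : 0 < l) {s : ℝ}
    (hs : 1 / (2 * √q) < |s|) : ¬ Summable fun k => coeff k (geodesicSeries q l) * s ^ k := by
  intro hsum
  have hnonneg := (hasNonnegExpansion_geodesicSeries q l hq).1
  have habs : Summable fun k => coeff k (geodesicSeries q l) * |s| ^ k := by
    simpa only [abs_mul, abs_pow, abs_of_nonneg (hnonneg _)] using hsum.abs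
  have hsub : Summable fun n => coeff (2 * n + l) (geodesicSeries q l) * |s| ^ (2 * n + l) :=
    habs.comp_injective fun a b h => by simp at h; omega
  have hpos : (0 : ℝ) < l * |s| ^ l := by
    have : 0 < |s| := (by positivity : (0 : ℝ) ≤ 1 / (2 * √q)).trans_lt hs
    positivity
  have hx : 1 / 4 < (q : ℝ) * s ^ 2 := by
    linarith [one_lt_four_mul_mul_sq (by exact_mod_cast hq) hs]
  refine not_summable_catalan hx ((summable_mul_right_iff hpos.ne').mp
    (hsub.of_nonneg_of_le (fun n => by positivity) fun n => ?_))
  calc (catalan n * (q * s ^ 2) ^ n * (l * |s| ^ l) : ℝ)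
      = l * (catalan n * q ^ n) * |s| ^ (2 * n + l) := by
        rw [pow_add, pow_mul, sq_abs]
        ring
    _ ≤ coeff (2 * n + l) (geodesicSeries q l) * |s| ^ (2 * n + l) := by
        gcongr
        exact le_coeff_geodesicSeries q l hl n

end GeodesicSeries

/-- For integers q ≥ 1 and l ≥ 1, the power series expansion
Σ_k c_k s^k of (l/√(1−4qs²))·((1 − √(1−4qs²))/(2qs))^l has nonnegative
coefficients, c_k = 0 for k < l, and radius of convergence 1/(2√q). -/
theorem coeffs_of_geodesic_generating_function (q l : ℕ) (hq : 1 ≤ q) (hl : 1 ≤ l) :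
    ∃ c : ℕ → ℝ,
      (∀ k, 0 ≤ c k) ∧
      (∀ k, k < l → c k = 0) ∧
      (∀ s : ℝ, s ≠ 0 → |s| < 1 / (2 * Real.sqrt q) →
        HasSum (fun k : ℕ => c k * s ^ k)
          (((l : ℝ) / Real.sqrt (1 - 4 * q * s ^ 2)) *
            ((1 - Real.sqrt (1 - 4 * q * s ^ 2)) / (2 * q * s)) ^ l)) ∧
      (∀ s : ℝ, |s| < 1 / (2 * Real.sqrt q) → Summable (fun k : ℕ => c k * s ^ k)) ∧
      (∀ s : ℝ, 1 / (2 * Real.sqrt q) < |s| → ¬ Summable (fun k : ℕ => c k * s ^ k)) := by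
  obtain ⟨hnonneg, hsum⟩ := hasNonnegExpansion_geodesicSeries q l hq
  exact ⟨fun k => coeff k (geodesicSeries q l), hnonneg,
    fun k hk => coeff_geodesicSeries_of_lt q l hk, fun s _ hs => hsum s hs,
    fun s hs => (hsum s hs).summable, fun s hs => not_summable_geodesicSeries q l hq hl hs⟩
end
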